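/- Let V be a finite type and A : Matrix V V ℕ. Then the following are equivalent: (1) there exists n ≥ 1 such that every entry of A^n is positive; (2) for all v, w ∈ V there exists m ≥ 1 with (A^m) v w > 0, and every vertex v has period 1, i.e. any natural number dividing every element of S(v) = {m ≥ 1 : (A^m) v v > 0} divides 1. -/

import Mathlib

/-!
A closed walk at `v` of length `a` followed by one of length `b` is a closed walk of length
`a + b`, so the return times of `v` form an additive submonoid of `ℕ`. If its gcd is `1`, it
contains every large enough integer (the Frobenius number of a numerical semigroup is finite);
prefixing a walk from `v` to `w` by closed walks at `v` then makes every entry of `A ^ n`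
positive for all large `n`. Conversely, if `A ^ n > 0` entrywise then some edge ends at `v`,
so both `n` and `n + 1` are return times of `v`.
-/

open Filter

namespace Matrix

variable {V R : Type*} [Fintype V] [DecidableEq V]
  [CommSemiring R] [PartialOrder R] [CanonicallyOrderedAdd R] [NoZeroDivisors R]

theorem pow_add_apply_pos_iff (A : Matrix V V R) (a b : ℕ) (u w : V) :
    0 < (A ^ (a + b)) u w ↔ ∃ v, 0 < (A ^ a) u v ∧ 0 < (A ^ b) v w := by
  simp [pow_add, mul_apply, Finset.sum_pos_iff, CanonicallyOrderedAdd.mul_pos]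

def returnTimes [Nontrivial R] (A : Matrix V V R) (v : V) : AddSubmonoid ℕ where
  carrier := {m | 0 < (A ^ m) v v}
  zero_mem' := by simp [zero_lt_one]
  add_mem' {a b} ha hb := (pow_add_apply_pos_iff A a b v v).2 ⟨v, ha, hb⟩

theorem eventually_pos_pow_apply_of_pos [Nontrivial R] {A : Matrix V V R} {v w : V} {m : ℕ}
    (hv : ∀ᶠ n in atTop, n ∈ returnTimes A v) (hvw : 0 < (A ^ m) v w) :
    ∀ᶠ n in atTop, 0 < (A ^ n) v w := by
  obtain ⟨N, hN⟩ := eventually_atTop.1 hv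
  refine eventually_atTop.2 ⟨N + m, fun n hn => ?_⟩
  have hpos := (pow_add_apply_pos_iff A (n - m) m v w).2 ⟨v, hN (n - m) (by omega), hvw⟩
  rwa [Nat.sub_add_cancel (by omega)] at hpos

theorem succ_mem_returnTimes_of_forall_pos [Nontrivial R] {A : Matrix V V R} {n : ℕ} (hn : 1 ≤ n)
    (hA : ∀ u w, 0 < (A ^ n) u w) (v : V) : n + 1 ∈ returnTimes A v := by
  obtain ⟨u, -, huv⟩ := (pow_add_apply_pos_iff A (n - 1) 1 v v).1 <| by
    rw [Nat.sub_add_cancel hn]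
    exact hA v v
  exact (pow_add_apply_pos_iff A n 1 v v).2 ⟨u, hA v u, huv⟩

end Matrix

theorem AddSubmonoid.eventually_mem_of_dvd_one (S : AddSubmonoid ℕ)
    (hS : ∀ k, (∀ m ∈ S, k ∣ m) → k ∣ 1) : ∀ᶠ n in atTop, n ∈ S := by
  have hgcd : Nat.setGcd S ∣ 1 := hS _ fun m hm => Nat.setGcd_dvd_of_mem hm
  obtain ⟨N, hN⟩ := Nat.exists_mem_closure_of_ge (S : Set ℕ)
  refine eventually_atTop.2 ⟨N, fun n hn => ?_⟩
  simpa using hN n hn (hgcd.trans (one_dvd n))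

open Matrix in
/-- Let `A` be the vertex matrix of a finite directed graph. The graph is `n`-connected
for some `n ≥ 1` (every entry of `A ^ n` is positive) if and only if it is strongly
connected (for all `v, w` there is `m ≥ 1` with `(A ^ m) v w > 0`) and every vertex
has period `1` (any natural number dividing every element of
`S(v) = {m ≥ 1 : (A ^ m) v v > 0}` divides `1`). -/
theorem n_connected_iff_strongly_connected_period_one (V : Type*) [Fintype V]
    [DecidableEq V] (A : Matrix V V ℕ) :
    (∃ n : ℕ, 1 ≤ n ∧ ∀ v w : V, 0 < (A ^ n) v w) ↔
      ((∀ v w : V, ∃ m : ℕ, 1 ≤ m ∧ 0 < (A ^ m) v w) ∧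
        ∀ v : V, ∀ k : ℕ, (∀ m : ℕ, 1 ≤ m → 0 < (A ^ m) v v → k ∣ m) → k ∣ 1) := by
  constructor
  · rintro ⟨n, hn, hA⟩
    refine ⟨fun v w => ⟨n, hn, hA v w⟩, fun v k hk => ?_⟩
    have hsucc := hk (n + 1) (by omega) (succ_mem_returnTimes_of_forall_pos hn hA v)
    exact (Nat.dvd_add_right (hk n hn (hA v v))).1 hsucc
  · rintro ⟨hconn, hper⟩
    have hdiag (v : V) : ∀ᶠ n in atTop, n ∈ returnTimes A v :=
      (returnTimes A v).eventually_mem_of_dvd_one fun k hk =>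
        hper v k fun m _ hm => hk m hm
    have hall : ∀ᶠ n in atTop, ∀ v w, 0 < (A ^ n) v w :=
      eventually_all.2 fun v => eventually_all.2 fun w =>
        have ⟨_, _, hvw⟩ := hconn v w
        eventually_pos_pow_apply_of_pos (hdiag v) hvw
    exact ((eventually_ge_atTop 1).and hall).exists
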